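/- arXiv:1407.7263 — 2 statements merged into one kernel-verified Lean document; each statement's English description precedes it below -/
import Mathlib

section
/- Let G be a finite simple graph of order n and girth at least 5, and let α ≥ 0 be a real number such that G has a vertex-disjoint path cover consisting of at most α·n paths. Then the location-domination number of G satisfies γLD(G) ≤ ((2 + 4α)/5)·n. -/
def SimpleGraph.DominatingSet {V : Type*} (G : SimpleGraph V) (D : Set V) : Prop :=
  ∀ v : V, ∃ d ∈ D, d = v ∨ G.Adj d v

def SimpleGraph.LocatingDominatingSet {V : Type*} (G : SimpleGraph V) (C : Set V) : Prop :=
  G.DominatingSet C ∧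
    ∀ u ∉ C, ∀ v ∉ C, u ≠ v → G.neighborSet u ∩ C ≠ G.neighborSet v ∩ C

noncomputable def SimpleGraph.gammaLD {V : Type*} (G : SimpleGraph V) : ℕ :=
  sInf {k : ℕ | ∃ C : Set V, G.LocatingDominatingSet C ∧ C.ncard = k}

def SimpleGraph.IsVdpCover {V : Type*} (G : SimpleGraph V) (Ps : Set (Set V)) : Prop :=
  (∀ v : V, ∃! S, S ∈ Ps ∧ v ∈ S) ∧
    ∀ S ∈ Ps, ∃ (a b : S) (p : (G.induce S).Walk a b),
      p.IsPath ∧ ∀ w : S, w ∈ p.support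

/-
Proof idea: on a path with `m` vertices, the vertices in positions `≡ 1, 3 (mod 5)`, together with
the last vertex when `m ≡ 1, 3 (mod 5)`, form a locating-dominating set of size at most
`(2m + 4)/5`. The union `C` of these sets over the paths of the cover is locating-dominating in `G`:
two vertices outside `C` with the same code have all of it as common neighbours, so by the girth
condition the code is a single vertex `c`; then `c` is the dominator of both on their own paths,
so they lie on the same path, where the path's own set separates them. Summing over the paths gives
`5 γLD(G) ≤ 2n + 4k` for a cover by `k` paths.
-/

open Finset

/-- Indices `≡ 1, 3 (mod 5)` of a path on `m` vertices, together with the last index when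
`m ≡ 1 (mod 5)` (it would be undominated) or `m ≡ 3 (mod 5)` (it would share its code with the
vertex two steps before it). -/
def IsPathPick (m j : ℕ) : Prop :=
  (j % 5 = 1 ∨ j % 5 = 3) ∨ (j + 1 = m ∧ (m % 5 = 1 ∨ m % 5 = 3))

theorem exists_adj_isPathPick_of_not {m k : ℕ} (hk : k < m) (hkP : ¬IsPathPick m k) :
    ∃ j < m, IsPathPick m j ∧ (j + 1 = k ∨ k + 1 = j) := by
  by_cases hpred : 1 ≤ k ∧ IsPathPick m (k - 1)
  · exact ⟨k - 1, by omega, hpred.2, by omega⟩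
  · refine ⟨k + 1, ?_, ?_, Or.inr rfl⟩ <;> unfold IsPathPick at * <;> omega

theorem exists_isPathPick_separating {m j u v : ℕ} (hu : u < m) (hv : v < m)
    (huP : ¬IsPathPick m u) (hvP : ¬IsPathPick m v) (hj : IsPathPick m j)
    (hju : j + 1 = u ∨ u + 1 = j) (hjv : j + 1 = v ∨ v + 1 = j) (huv : u ≠ v) :
    ∃ i < m, IsPathPick m i ∧ ¬((i + 1 = u ∨ u + 1 = i) ↔ (i + 1 = v ∨ v + 1 = i)) := by
  by_cases hprev : 2 ≤ j ∧ IsPathPick m (j - 2)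
  · exact ⟨j - 2, by omega, hprev.2, by omega⟩
  · refine ⟨j + 2, ?_, ?_, by omega⟩ <;> unfold IsPathPick at * <;> omega

theorem card_filter_range_mod_five (m : ℕ) :
    #{j ∈ range m | j % 5 = 1 ∨ j % 5 = 3} =
      2 * (m / 5) + if m % 5 ≤ 1 then 0 else if m % 5 ≤ 3 then 1 else 2 := by
  induction m with
  | zero => simp
  | succ m ih =>
    rw [range_add_one, filter_insert]
    split_ifs at ih ⊢ <;> first | omega | (rw [card_insert_of_notMem (by simp)]; omega)

namespace SimpleGraph

variable {V : Type*} {G : SimpleGraph V}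

theorem subsingleton_commonNeighbors_of_five_le_egirth (hg : 5 ≤ G.egirth) {u v : V}
    (huv : u ≠ v) : (G.commonNeighbors u v).Subsingleton := by
  rintro c ⟨huc : G.Adj u c, hvc : G.Adj v c⟩ d ⟨hud : G.Adj u d, hvd : G.Adj v d⟩
  by_contra hcd
  have hcycle : (Walk.cons huc (.cons hvc.symm (.cons hvd (.cons hud.symm .nil)))).IsCycle := by
    simp [Walk.cons_isCycle_iff, Walk.isPath_def, huc.ne', hvc.ne', hud.ne', hvd.ne, huv,
      huv.symm, hcd]
  have := hg.trans (egirth_le_length hcycle)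
  norm_num at this

/-- Two vertices outside `C` with equal codes have all of their code as common neighbours, so
girth at least five leaves only codes of size one to be told apart. -/
theorem locatingDominatingSet_of_five_le_egirth (hg : 5 ≤ G.egirth) {C : Set V}
    (hdom : G.DominatingSet C)
    (hsep : ∀ u ∉ C, ∀ v ∉ C, ∀ c,
      G.neighborSet u ∩ C = {c} → G.neighborSet v ∩ C = {c} → u = v) :
    G.LocatingDominatingSet C := by
  refine ⟨hdom, fun u hu v hv huv hcode => huv ?_⟩
  obtain ⟨c, hcC, rfl | hcu⟩ := hdom u
  · exact absurd hcC hu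
  have hsub : G.neighborSet u ∩ C ⊆ G.commonNeighbors u v := fun x hx =>
    ⟨hx.1, (hcode ▸ hx).1⟩
  have hcode_u : G.neighborSet u ∩ C = {c} :=
    ((subsingleton_commonNeighbors_of_five_le_egirth hg huv).anti hsub).eq_singleton_of_mem
      ⟨hcu.symm, hcC⟩
  exact hsep u hu v hv c hcode_u (hcode ▸ hcode_u)

theorem Copy.exists_apply_eq_and_neighborSet_inter_eq_singleton {W : Type*}
    {H : SimpleGraph W} (φ : Copy H G) {D : Set W} {C : Set V} (hD : H.DominatingSet D)
    (hDC : ∀ y ∈ D, φ y ∈ C) {x : W} (hx : x ∉ D) {c : V}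
    (hcode : G.neighborSet (φ x) ∩ C = {c}) :
    ∃ y, φ y = c ∧ H.neighborSet x ∩ D = {y} := by
  have hadj : ∀ y ∈ D, H.Adj x y → φ y = c := fun y hy hxy =>
    hcode.subset ⟨φ.toHom.map_adj hxy, hDC y hy⟩
  obtain ⟨y, hyD, rfl | hyx⟩ := hD x
  · exact absurd hyD hx
  refine ⟨y, hadj y hyD hyx.symm, Set.eq_singleton_iff_unique_mem.2 ⟨⟨hyx.symm, hyD⟩, ?_⟩⟩
  exact fun z hz => φ.injective ((hadj z hz.2 hz.1).trans (hadj y hyD hyx.symm).symm)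

/-- If `φ i x` has the singleton code `{φ i y}` in `G`, then `x` has the code `{y}` in `H i`, so the
locating property of `D i` separates such vertices. -/
theorem locatingDominatingSet_iUnion_image_of_five_le_egirth {ι : Type*} {W : ι → Type*}
    {H : ∀ i, SimpleGraph (W i)} (hg : 5 ≤ G.egirth) (φ : ∀ i, Copy (H i) G)
    (hφ : Function.Bijective fun p : Σ i, W i => φ p.1 p.2) {D : ∀ i, Set (W i)}
    (hD : ∀ i, (H i).LocatingDominatingSet (D i)) :
    G.LocatingDominatingSet (⋃ i, φ i '' D i) := by
  have hDC : ∀ i, ∀ y ∈ D i, φ i y ∈ ⋃ i, φ i '' D i := fun i y hy =>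
    Set.mem_iUnion.2 ⟨i, y, hy, rfl⟩
  have hdom : G.DominatingSet (⋃ i, φ i '' D i) := by
    intro v
    obtain ⟨⟨i, x⟩, rfl⟩ := hφ.2 v
    obtain ⟨y, hy, rfl | hyx⟩ := (hD i).1 x
    · exact ⟨_, hDC i y hy, Or.inl rfl⟩
    · exact ⟨_, hDC i y hy, Or.inr ((φ i).toHom.map_adj hyx)⟩
  refine locatingDominatingSet_of_five_le_egirth hg hdom fun u hu v hv c hcu hcv => ?_
  obtain ⟨⟨i, x⟩, rfl⟩ := hφ.2 u
  obtain ⟨⟨j, x'⟩, rfl⟩ := hφ.2 v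
  have hx : x ∉ D i := fun h => hu (hDC i x h)
  have hx' : x' ∉ D j := fun h => hv (hDC j x' h)
  obtain ⟨y, rfl, hy⟩ :=
    (φ i).exists_apply_eq_and_neighborSet_inter_eq_singleton (hD i).1 (hDC i) hx hcu
  obtain ⟨y', hyy', hy'⟩ :=
    (φ j).exists_apply_eq_and_neighborSet_inter_eq_singleton (hD j).1 (hDC j) hx' hcv
  obtain ⟨rfl, hyy'⟩ := Sigma.mk.inj_iff.1 (hφ.1 hyy' : (⟨j, y'⟩ : Σ i, W i) = ⟨i, y⟩)
  cases hyy'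
  by_contra hxx'
  exact (hD _).2 x hx x' hx' (fun h => hxx' (congrArg _ h)) (hy.trans hy'.symm)

def pathLocatingSet (m : ℕ) : Set (Fin m) :=
  {j | IsPathPick m j}

theorem five_mul_ncard_pathLocatingSet_le (m : ℕ) :
    5 * (pathLocatingSet m).ncard ≤ 2 * m + 4 := by
  have hcount := card_filter_range_mod_five m
  have hle : ∀ t : Finset ℕ, (∀ j : Fin m, IsPathPick m j → (j : ℕ) ∈ t) →
      (pathLocatingSet m).ncard ≤ #t := fun t ht =>
    (Set.ncard_le_ncard_of_injOn Fin.val ht Fin.val_injective.injOn t.finite_toSet).trans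
      (Set.ncard_coe_finset t).le
  by_cases hlast : m % 5 = 1 ∨ m % 5 = 3
  · have := hle (insert (m - 1) {j ∈ range m | j % 5 = 1 ∨ j % 5 = 3}) fun j hj => by
      simp only [IsPathPick, mem_insert, mem_filter, mem_range] at hj ⊢; omega
    have := card_insert_le (m - 1) {j ∈ range m | j % 5 = 1 ∨ j % 5 = 3}
    split_ifs at hcount <;> omega
  · have := hle {j ∈ range m | j % 5 = 1 ∨ j % 5 = 3} fun j hj => by
      simp only [IsPathPick, mem_filter, mem_range] at hj ⊢; omega
    split_ifs at hcount <;> omega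

theorem pathGraph_locatingDominatingSet (m : ℕ) :
    (pathGraph m).LocatingDominatingSet (pathLocatingSet m) := by
  have hdom : ∀ k ∉ pathLocatingSet m, ∃ j ∈ pathLocatingSet m, (pathGraph m).Adj j k := by
    intro k hk
    obtain ⟨j, hjm, hj, hjk⟩ := exists_adj_isPathPick_of_not k.isLt hk
    exact ⟨⟨j, hjm⟩, hj, pathGraph_adj.2 hjk⟩
  refine ⟨fun k => ?_, fun u hu v hv huv hcode => ?_⟩
  · by_cases hk : k ∈ pathLocatingSet m
    · exact ⟨k, hk, Or.inl rfl⟩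
    · obtain ⟨j, hj, hjk⟩ := hdom k hk
      exact ⟨j, hj, Or.inr hjk⟩
  · obtain ⟨j, hj, hju⟩ := hdom u hu
    have hjv : j ∈ (pathGraph m).neighborSet v ∩ pathLocatingSet m := hcode ▸ ⟨hju.symm, hj⟩
    obtain ⟨i, him, hi, hsep⟩ := exists_isPathPick_separating u.isLt v.isLt hu hv hj
      (pathGraph_adj.1 hju) (pathGraph_adj.1 hjv.1.symm) (Fin.val_ne_of_ne huv)
    have hiC : (⟨i, him⟩ : Fin m) ∈ pathLocatingSet m := hi
    have := congrArg ((⟨i, him⟩ : Fin m) ∈ ·) hcode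
    simp only [Set.mem_inter_iff, mem_neighborSet, pathGraph_adj, and_iff_left hiC,
      eq_iff_iff] at this
    exact hsep (by omega)

theorem IsVdpCover.exists_pathGraph_copies {Ps : Set (Set V)} (h : G.IsVdpCover Ps) :
    ∃ (m : Ps → ℕ) (φ : ∀ S : Ps, Copy (pathGraph (m S)) G),
      Function.Bijective fun p : Σ S : Ps, Fin (m S) => φ p.1 p.2 := by
  classical
  choose a b p hp hspan using fun S : Ps => h.2 S S.2
  refine ⟨fun S => (p S).length + 1, fun S => (Copy.induce G S).comp (hp S).pathGraphCopy,
    ?_, ?_⟩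
  · rintro ⟨S, x⟩ ⟨T, y⟩ hxy
    have hxy' : ((p S).support[x] : V) = (p T).support[y] := hxy
    obtain rfl : S = T := Subtype.ext <| (h.1 _).unique ⟨S.2, (p S).support[x].2⟩
      ⟨T.2, hxy' ▸ (p T).support[y].2⟩
    rw [((Copy.induce G S).comp (hp S).pathGraphCopy).injective (a₁ := x) (a₂ := y) hxy]
  · intro v
    obtain ⟨S, ⟨hS, hv⟩, -⟩ := h.1 v
    obtain ⟨n, hn, hnv⟩ := List.getElem_of_mem (hspan ⟨S, hS⟩ ⟨v, hv⟩)
    refine ⟨⟨⟨S, hS⟩, ⟨n, by simpa using hn⟩⟩, ?_⟩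
    show ((p ⟨S, hS⟩).support[n] : V) = v
    rw [hnv]

theorem five_mul_gammaLD_le_of_pathGraph_copies [Fintype V] {ι : Type*} [Fintype ι]
    (hg : 5 ≤ G.egirth) {m : ι → ℕ} (φ : ∀ i, Copy (pathGraph (m i)) G)
    (hφ : Function.Bijective fun p : Σ i, Fin (m i) => φ p.1 p.2) :
    5 * G.gammaLD ≤ 2 * Fintype.card V + 4 * Fintype.card ι := by
  have hLD := locatingDominatingSet_iUnion_image_of_five_le_egirth hg φ hφ
    fun i => pathGraph_locatingDominatingSet (m i)
  have hsum : ∑ i, m i = Fintype.card V := by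
    simp [← Fintype.card_of_bijective hφ, Fintype.card_sigma]
  calc 5 * G.gammaLD ≤ 5 * (⋃ i, φ i '' pathLocatingSet (m i)).ncard := by
        gcongr
        exact Nat.sInf_le ⟨_, hLD, rfl⟩
    _ ≤ ∑ i, 5 * (pathLocatingSet (m i)).ncard := by
        rw [← mul_sum]
        gcongr
        exact (Set.ncard_iUnion_le_of_fintype _).trans
          (sum_le_sum fun i _ => Set.ncard_image_le (Set.toFinite _))
    _ ≤ ∑ i, (2 * m i + 4) := sum_le_sum fun i _ => five_mul_ncard_pathLocatingSet_le (m i)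
    _ = 2 * Fintype.card V + 4 * Fintype.card ι := by
        rw [sum_add_distrib, ← mul_sum, hsum, sum_const, card_univ, smul_eq_mul, mul_comm 4]

theorem IsVdpCover.five_mul_gammaLD_le [Fintype V] (hg : 5 ≤ G.egirth) {Ps : Set (Set V)}
    (h : G.IsVdpCover Ps) : 5 * G.gammaLD ≤ 2 * Fintype.card V + 4 * Ps.ncard := by
  obtain ⟨m, φ, hφ⟩ := h.exists_pathGraph_copies
  have := Fintype.ofFinite Ps
  rw [← Set.fintypeCard_eq_ncard]
  exact five_mul_gammaLD_le_of_pathGraph_copies hg φ hφ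

end SimpleGraph

theorem gammaLD_le_of_vdpCover_general
    {V : Type*} [Fintype V] (G : SimpleGraph V) (hg : 5 ≤ G.egirth)
    (α : ℝ)
    (Ps : Set (Set V)) (hcover : G.IsVdpCover Ps)
    (hsize : (Ps.ncard : ℝ) ≤ α * Fintype.card V) :
    (G.gammaLD : ℝ) ≤ (2 + 4 * α) / 5 * Fintype.card V := by
  have h : (5 * G.gammaLD : ℝ) ≤ 2 * Fintype.card V + 4 * Ps.ncard := by
    exact_mod_cast hcover.five_mul_gammaLD_le hg
  linarith

/-- Theorem: if a graph of order `n` and girth at least 5 has a vdp-cover with at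
most `α·n` paths, then its location-domination number is at most `((2+4α)/5)·n`. -/
theorem gammaLD_le_of_vdpCover
    {V : Type*} [Fintype V] (G : SimpleGraph V) (hg : 5 ≤ G.egirth)
    (α : ℝ) (hα : 0 ≤ α)
    (Ps : Set (Set V)) (hcover : G.IsVdpCover Ps)
    (hsize : (Ps.ncard : ℝ) ≤ α * Fintype.card V) :
    (G.gammaLD : ℝ) ≤ (2 + 4 * α) / 5 * Fintype.card V :=
  gammaLD_le_of_vdpCover_general G hg α Ps hcover hsize
end

section
/- For every integer k ≥ 3 there exists a connected finite simple graph G of order n = 11k + 1, with girth at least 5, minimum degree at least 3, and location-domination number γLD(G) = 4k = (4/11)·(n − 1). (In particular, there are infinitely many connected graphs of girth at least 5 and minimum degree at least 3 attaining γLD(G) = (4/11)·(n − 1).) -/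
/-!
Let `C` be a locating-dominating set of `G₁₁ᵏ` and `T` its part inside one copy of `P₁₁`. The
vertices of that copy outside `T ∪ {x}` see only their own copy, so they are dominated and told
apart by `T` alone. `P₁₁` has no 4-cycle, so two of them share at most one neighbour in `T`: their
traces are distinct nonempty subsets of `T` pairwise meeting in at most one point, and there are at
most `(|T| + 1).choose 2` of those. Since `11 - 1 - |T| > (|T| + 1).choose 2` for `|T| ≤ 3`, every
copy carries at least `4` vertices of `C`. Conversely `{u₂, v₃, v₄, x}` in every copy is
locating-dominating: the hub `y` is the only vertex with code neighbours in two different copies.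
-/

open Set

theorem Set.ncard_le_choose_of_pairwise_subsingleton_inter {α β : Type*} {T : Set α}
    (hT : T.Finite) {W : Set β} {f : β → Set α} (hf : ∀ w ∈ W, (f w).Nonempty ∧ f w ⊆ T)
    (hinj : InjOn f W) (hinter : W.Pairwise fun v w => (f v ∩ f w).Subsingleton) :
    W.ncard ≤ (T.ncard + 1).choose 2 := by
  rcases W.eq_empty_or_nonempty with rfl | ⟨w₀, hw₀⟩
  · simp
  have : Nonempty α := ⟨(hf w₀ hw₀).1.some⟩
  have hpair : ∀ w ∈ W, ∃ a ∈ f w, ∃ b ∈ f w, a = b → f w = {a} := by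
    intro w hw
    rcases (f w).subsingleton_or_nontrivial with hs | ⟨a, ha, b, hb, hab⟩
    · obtain ⟨a, ha⟩ := (hf w hw).1
      exact ⟨a, ha, a, ha, fun _ => hs.eq_singleton_of_mem ha⟩
    · exact ⟨a, ha, b, hb, fun h => absurd h hab⟩
  choose! a ha b hb hab using hpair
  have hsub : ∀ w ∈ W, ∀ x ∈ s(a w, b w), x ∈ f w := by
    intro w hw x hx
    rcases Sym2.mem_iff.mp hx with rfl | rfl
    exacts [ha w hw, hb w hw]
  calc W.ncard ≤ (hT.toFinset.sym2 : Set (Sym2 α)).ncard := by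
        refine ncard_le_ncard_of_injOn (fun w => s(a w, b w)) ?_ ?_ (Finset.finite_toSet _)
        · intro w hw
          simp [(hf w hw).2 (ha w hw), (hf w hw).2 (hb w hw)]
        · intro v hv w hw (hvw : s(a v, b v) = s(a w, b w))
          by_contra hne
          -- the four points `a v, b v, a w, b w` lie in the subsingleton `f v ∩ f w`
          have hs := hinter hv hw hne
          have hin : ∀ x ∈ s(a w, b w), x ∈ f v ∩ f w := fun x hx =>
            ⟨hsub v hv x (hvw ▸ hx), hsub w hw x hx⟩
          have hav := hin (a v) (hvw ▸ Sym2.mem_mk_left _ _)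
          have haw := hin (a w) (Sym2.mem_mk_left _ _)
          have hv₁ := hab v hv (hs hav (hin (b v) (hvw ▸ Sym2.mem_mk_right _ _)))
          have hw₁ := hab w hw (hs haw (hin (b w) (Sym2.mem_mk_right _ _)))
          exact hne (hinj hv hw (by rw [hv₁, hw₁, hs hav haw]))
    _ = (T.ncard + 1).choose 2 := by
        rw [ncard_coe_finset, Finset.card_sym2, ncard_eq_toFinset_card T hT]

theorem Set.ncard_image_some_univ_prod {ι α : Type*} [Finite ι] (S : Set α) :
    (some '' (univ ×ˢ S) : Set (Option (ι × α))).ncard = Nat.card ι * S.ncard := by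
  rw [ncard_image_of_injective _ (Option.some_injective _), ncard_prod, ncard_univ]

theorem Set.sum_ncard_slices_le_ncard {ι α : Type*} [Fintype ι] [Finite α]
    (C : Set (Option (ι × α))) : ∑ i, {a | some (i, a) ∈ C}.ncard ≤ C.ncard := by
  simp_rw [← Nat.card_coe_set_eq]
  rw [← Nat.card_sigma]
  refine Nat.card_le_card_of_injective (fun x => ⟨some (x.1, x.2), x.2.2⟩) ?_
  rintro ⟨i, a, ha⟩ ⟨j, b, hb⟩ h
  simp only [Subtype.mk.injEq, Option.some.injEq, Prod.mk.injEq] at h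
  obtain ⟨rfl, rfl⟩ := h
  rfl

namespace SimpleGraph

variable {V : Type*} {G : SimpleGraph V}

def LocatesDominates (G : SimpleGraph V) (C W : Set V) : Prop :=
  (∀ w ∈ W, (G.neighborSet w ∩ C).Nonempty) ∧ InjOn (fun w => G.neighborSet w ∩ C) W

theorem LocatesDominates.ncard_le {C W : Set V}
    (hG : ∀ u w, u ≠ w → (G.commonNeighbors u w).Subsingleton) (hC : C.Finite)
    (h : G.LocatesDominates C W) : W.ncard ≤ (C.ncard + 1).choose 2 :=
  ncard_le_choose_of_pairwise_subsingleton_inter hC (fun w hw => ⟨h.1 w hw, inter_subset_right⟩)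
    h.2 fun v _ w _ hvw => (hG v w hvw).anti <| by
      rw [commonNeighbors_eq]; exact inter_subset_inter inter_subset_left inter_subset_left

theorem card_le_of_locatesDominates_compl_insert [Finite V] {C : Set V} {r : V}
    (hG : ∀ u w, u ≠ w → (G.commonNeighbors u w).Subsingleton)
    (h : G.LocatesDominates C (insert r C)ᶜ) :
    Nat.card V ≤ C.ncard + 1 + (C.ncard + 1).choose 2 := by
  have hW := h.ncard_le hG C.toFinite
  have hsplit := ncard_add_ncard_compl (insert r C)
  have hins := ncard_insert_le r C
  omega

theorem locatingDominatingSet_of_forall {C : Set V} (hdom : ∀ v ∉ C, ∃ c ∈ C, G.Adj c v)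
    (hsep : ∀ u ∉ C, ∀ v ∉ C, u ≠ v → ∃ c ∈ C, ¬(G.Adj u c ↔ G.Adj v c)) :
    G.LocatingDominatingSet C := by
  refine ⟨fun v => ?_, fun u hu v hv huv h => ?_⟩
  · by_cases hv : v ∈ C
    · exact ⟨v, hv, Or.inl rfl⟩
    · obtain ⟨c, hc, hcv⟩ := hdom v hv
      exact ⟨c, hc, Or.inr hcv⟩
  · obtain ⟨c, hc, hsep⟩ := hsep u hu v hv huv
    have := congrArg (c ∈ ·) h
    simp only [mem_inter_iff, mem_neighborSet, hc, and_true, eq_iff_iff] at this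
    exact hsep this

theorem gammaLD_eq {C : Set V} {m : ℕ} (hC : G.LocatingDominatingSet C) (hm : C.ncard = m)
    (hmin : ∀ C', G.LocatingDominatingSet C' → m ≤ C'.ncard) : G.gammaLD = m :=
  le_antisymm (Nat.sInf_le ⟨C, hC, hm⟩)
    (le_csInf ⟨m, C, hC, hm⟩ fun _ ⟨C', hC', h⟩ => h ▸ hmin C' hC')

theorem five_le_egirth (h3 : G.CliqueFree 3)
    (h4 : ∀ u w, u ≠ w → (G.commonNeighbors u w).Subsingleton) : 5 ≤ G.egirth := by
  refine le_egirth.mpr fun a c hc => ?_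
  by_contra! hlt
  have hlen : c.length = 3 ∨ c.length = 4 := by
    have := hc.three_le_length
    norm_cast at hlt
    omega
  rcases hlen with hlen | hlen
  · obtain ⟨s, hs⟩ := is3Clique_iff_exists_cycle_length_three.mpr ⟨a, c, hc, hlen⟩
    exact h3 s hs
  · match c, hc, hlen with
    | .cons hab (.cons hbc (.cons hcd (.cons hda .nil))), hc, _ =>
      have hnd := hc.support_nodup
      simp only [Walk.support_cons, Walk.support_nil, List.tail_cons, List.nodup_cons,
        List.mem_cons, not_or] at hnd
      obtain ⟨⟨-, hbd, -⟩, ⟨-, hca, -⟩, -⟩ := hnd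
      exact hbd (h4 _ _ (Ne.symm hca) ⟨hab, hbc.symm⟩ ⟨hda.symm, hcd⟩)

variable {W : Type*} {H : SimpleGraph W} {r : W} {ι : Type*}

-- `none` is the hub, `some (i, a)` the vertex `a` of the `i`-th copy of `H`.
def hubJoin (H : SimpleGraph W) (r : W) (ι : Type*) : SimpleGraph (Option (ι × W)) where
  Adj
    | some (i, a), some (j, b) => i = j ∧ H.Adj a b
    | some (_, a), none => a = r
    | none, some (_, b) => b = r
    | none, none => False
  symm := ⟨by
    rintro (_ | ⟨i, a⟩) (_ | ⟨j, b⟩) h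
    exacts [h, h, h, ⟨h.1.symm, h.2.symm⟩]⟩
  loopless := ⟨by
    rintro (_ | ⟨i, a⟩) h
    exacts [h, h.2.ne rfl]⟩

@[simp] theorem hubJoin_adj_some_some {i j : ι} {a b : W} :
    (H.hubJoin r ι).Adj (some (i, a)) (some (j, b)) ↔ i = j ∧ H.Adj a b := Iff.rfl

@[simp] theorem hubJoin_adj_some_none {i : ι} {a : W} :
    (H.hubJoin r ι).Adj (some (i, a)) none ↔ a = r := Iff.rfl

@[simp] theorem hubJoin_adj_none_some {i : ι} {a : W} :
    (H.hubJoin r ι).Adj none (some (i, a)) ↔ a = r := Iff.rfl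

@[simp] theorem hubJoin_not_adj_none_none : ¬(H.hubJoin r ι).Adj none none := id

def hubJoinCopy (H : SimpleGraph W) (r : W) (i : ι) : H ↪g H.hubJoin r ι where
  toFun a := some (i, a)
  inj' := (Option.some_injective _).comp (Prod.mk_right_injective i)
  map_rel_iff' := by simp

theorem hubJoin_connected (hH : H.Connected) : (H.hubJoin r ι).Connected := by
  refine (connected_iff_exists_forall_reachable _).mpr ⟨none, ?_⟩
  rintro (_ | ⟨i, a⟩)
  · rfl
  · exact (Adj.reachable (by rfl)).trans ((hH r a).map (hubJoinCopy H r i).toHom)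

theorem hubJoin_cliqueFree_three (hH : H.CliqueFree 3) : (H.hubJoin r ι).CliqueFree 3 := by
  classical
  intro s hs
  obtain ⟨u, v, w, huv, huw, hvw, -⟩ := is3Clique_iff.mp hs
  rcases u with _ | ⟨i, a⟩ <;> rcases v with _ | ⟨j, b⟩ <;> rcases w with _ | ⟨l, c⟩ <;>
    simp only [hubJoin_adj_some_some, hubJoin_adj_some_none, hubJoin_adj_none_some,
      hubJoin_not_adj_none_none] at huv huw hvw
  case some.some.some => exact hH _ (is3Clique_triple_iff.mpr ⟨huv.2, huw.2, hvw.2⟩)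
  all_goals simp_all

theorem hubJoin_commonNeighbors_subsingleton
    (hH : ∀ a b, a ≠ b → (H.commonNeighbors a b).Subsingleton) (u w : Option (ι × W))
    (huw : u ≠ w) :
    ((H.hubJoin r ι).commonNeighbors u w).Subsingleton := by
  intro v hv x hx
  rw [mem_commonNeighbors] at hv hx
  rcases u with _ | ⟨i, a⟩ <;> rcases w with _ | ⟨j, b⟩ <;> rcases v with _ | ⟨l, c⟩ <;>
    rcases x with _ | ⟨m, d⟩ <;>
    simp only [hubJoin_adj_some_some, hubJoin_adj_some_none, hubJoin_adj_none_some,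
      hubJoin_not_adj_none_none] at hv hx
  case some.some.some.some =>
    obtain ⟨⟨rfl, hac⟩, rfl, hbc⟩ := hv
    obtain ⟨⟨rfl, had⟩, -, hbd⟩ := hx
    rw [hH a b (by simpa using huw) ⟨hac, hbc⟩ ⟨had, hbd⟩]
  all_goals simp_all

theorem hubJoin_neighborSet_none :
    (H.hubJoin r ι).neighborSet none = range fun i => some (i, r) := by
  ext (_ | ⟨i, a⟩) <;> simp [eq_comm]

theorem hubJoin_neighborSet_some_of_ne {a : W} (ha : a ≠ r) (i : ι) :
    (H.hubJoin r ι).neighborSet (some (i, a)) = hubJoinCopy H r i '' H.neighborSet a := by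
  ext (_ | ⟨j, b⟩) <;> simp [hubJoinCopy, ha, eq_comm, and_comm]

theorem hubJoin_neighborSet_some_root (i : ι) :
    (H.hubJoin r ι).neighborSet (some (i, r)) =
      insert none (hubJoinCopy H r i '' H.neighborSet r) := by
  ext (_ | ⟨j, b⟩) <;> simp [hubJoinCopy, eq_comm, and_comm]

theorem hubJoin_ncard_neighborSet_none :
    ((H.hubJoin r ι).neighborSet none).ncard = Nat.card ι := by
  rw [hubJoin_neighborSet_none, ncard_range_of_injective]
  exact (Option.some_injective _).comp (Prod.mk_left_injective r)

theorem hubJoin_ncard_neighborSet_some_of_ne {a : W} (ha : a ≠ r) (i : ι) :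
    ((H.hubJoin r ι).neighborSet (some (i, a))).ncard = (H.neighborSet a).ncard := by
  rw [hubJoin_neighborSet_some_of_ne ha, ncard_image_of_injective _ (hubJoinCopy H r i).injective]

theorem hubJoin_ncard_neighborSet_some_root [Finite W] (i : ι) :
    ((H.hubJoin r ι).neighborSet (some (i, r))).ncard = (H.neighborSet r).ncard + 1 := by
  rw [hubJoin_neighborSet_some_root, ncard_insert_of_notMem (by simp [hubJoinCopy])
    ((H.neighborSet r).toFinite.image _), ncard_image_of_injective _ (hubJoinCopy H r i).injective]

theorem LocatingDominatingSet.hubJoin [Nontrivial ι] {S : Set W}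
    (hS : H.LocatingDominatingSet S) (hr : r ∈ S) :
    (H.hubJoin r ι).LocatingDominatingSet (some '' (univ ×ˢ S)) := by
  have mem {i : ι} {a : W} : some (i, a) ∈ some '' (univ ×ˢ S) ↔ a ∈ S := by simp
  have hcode (a : W) (ha : a ∉ S) : ∃ d ∈ S, H.Adj a d := by
    obtain ⟨d, hd, rfl | hda⟩ := hS.1 a
    exacts [absurd hd ha, ⟨d, hd, hda.symm⟩]
  refine ⟨?_, ?_⟩
  · rintro (_ | ⟨i, a⟩)
    · obtain ⟨i⟩ := (inferInstance : Nonempty ι)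
      exact ⟨some (i, r), mem.2 hr, Or.inr rfl⟩
    · obtain ⟨d, hd, hda⟩ := hS.1 a
      exact ⟨some (i, d), mem.2 hd, by simpa using hda⟩
  · have hub_ne (j : ι) (b : W) : (H.hubJoin r ι).neighborSet none ∩ some '' (univ ×ˢ S) ≠
        (H.hubJoin r ι).neighborSet (some (j, b)) ∩ some '' (univ ×ˢ S) := by
      intro h
      obtain ⟨i, hij⟩ := exists_ne j
      have hi : some (i, r) ∈ (H.hubJoin r ι).neighborSet none ∩ some '' (univ ×ˢ S) :=
        ⟨rfl, mem.2 hr⟩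
      rw [h] at hi
      exact hij hi.1.1.symm
    rintro (_ | ⟨i, a⟩) hu (_ | ⟨j, b⟩) hv huv
    · exact absurd rfl huv
    · exact hub_ne j b
    · exact (hub_ne i a).symm
    · intro h
      by_cases hij : i = j
      · subst hij
        refine hS.2 a (mem.not.1 hu) b (mem.not.1 hv) (by simpa using huv) ?_
        have htrace (c : W) : (fun d => some (i, d)) ⁻¹'
            ((H.hubJoin r ι).neighborSet (some (i, c)) ∩ some '' (univ ×ˢ S)) =
            H.neighborSet c ∩ S := by
          ext d; simp
        rw [← htrace a, ← htrace b, h]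
      · obtain ⟨d, hd, had⟩ := hcode a (mem.not.1 hu)
        have hid : some (i, d) ∈ (H.hubJoin r ι).neighborSet (some (i, a)) ∩
            some '' (univ ×ˢ S) := ⟨⟨rfl, had⟩, mem.2 hd⟩
        rw [h] at hid
        exact hij hid.1.1.symm

theorem LocatingDominatingSet.locatesDominates_hubJoin {C : Set (Option (ι × W))}
    (hC : (H.hubJoin r ι).LocatingDominatingSet C) (i : ι) :
    H.LocatesDominates {a | some (i, a) ∈ C} (insert r {a | some (i, a) ∈ C})ᶜ := by
  have htrace (a : W) (ha : a ≠ r) : (H.hubJoin r ι).neighborSet (some (i, a)) ∩ C =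
      hubJoinCopy H r i '' (H.neighborSet a ∩ {b | some (i, b) ∈ C}) := by
    rw [hubJoin_neighborSet_some_of_ne ha, ← image_inter_preimage]
    rfl
  refine ⟨fun a ha => ?_, fun a ha b hb hab => ?_⟩
  · simp only [mem_compl_iff, mem_insert_iff, not_or, mem_ofPred_eq] at ha
    obtain ⟨d, hdC, rfl | hd⟩ := hC.1 (some (i, a))
    · exact absurd hdC ha.2
    · have hdtrace : d ∈ (H.hubJoin r ι).neighborSet (some (i, a)) ∩ C := ⟨hd.symm, hdC⟩
      rw [htrace a ha.1] at hdtrace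
      exact image_nonempty.mp ⟨d, hdtrace⟩
  · simp only [mem_compl_iff, mem_insert_iff, not_or, mem_ofPred_eq] at ha hb
    by_contra hne
    refine hC.2 _ ha.2 _ hb.2 (by simpa using hne) ?_
    rw [htrace a ha.1, htrace b hb.1]
    exact congrArg _ hab

theorem hubJoin_mul_le_ncard [Fintype ι] [Finite W] {m : ℕ}
    (hm : ∀ T : Set W, H.LocatesDominates T (insert r T)ᶜ → m ≤ T.ncard)
    {C : Set (Option (ι × W))} (hC : (H.hubJoin r ι).LocatingDominatingSet C) :
    Fintype.card ι * m ≤ C.ncard :=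
  calc Fintype.card ι * m = ∑ _i : ι, m := by simp
    _ ≤ ∑ i, {a | some (i, a) ∈ C}.ncard :=
      Finset.sum_le_sum fun i _ => hm _ (hC.locatesDominates_hubJoin i)
    _ ≤ C.ncard := sum_ncard_slices_le_ncard C

theorem hubJoin_le_ncard_neighborSet [Finite W] {m : ℕ}
    (hH : ∀ a, a ≠ r → m ≤ (H.neighborSet a).ncard) (hr : m ≤ (H.neighborSet r).ncard + 1)
    (hι : m ≤ Nat.card ι) (v : Option (ι × W)) : m ≤ ((H.hubJoin r ι).neighborSet v).ncard := by
  rcases v with _ | ⟨i, a⟩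
  · rwa [hubJoin_ncard_neighborSet_none]
  · by_cases ha : a = r
    · rwa [ha, hubJoin_ncard_neighborSet_some_root]
    · rw [hubJoin_ncard_neighborSet_some_of_ne ha]
      exact hH a ha

end SimpleGraph

open SimpleGraph

-- `uᵢ = i`, `vᵢ = i + 5`, and `x = 10` subdivides the edge `u₀u₁`.
def petersenEdges : List (Fin 11 × Fin 11) :=
  [(0, 10), (10, 1), (1, 2), (2, 3), (3, 4), (4, 0), (0, 5), (1, 6), (2, 7), (3, 8), (4, 9),
    (5, 7), (7, 9), (9, 6), (6, 8), (8, 5)]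

def subdividedPetersen : SimpleGraph (Fin 11) :=
  SimpleGraph.fromRel fun a b => (a, b) ∈ petersenEdges

instance : DecidableRel subdividedPetersen.Adj := fun a b =>
  inferInstanceAs (Decidable (a ≠ b ∧ ((a, b) ∈ petersenEdges ∨ (b, a) ∈ petersenEdges)))

namespace subdividedPetersen

theorem connected : subdividedPetersen.Connected := by
  let path : pathGraph 11 →g subdividedPetersen :=
    ⟨![10, 1, 2, 3, 4, 0, 5, 7, 9, 6, 8], fun {a b} h => by
      rw [pathGraph_adj] at h
      revert a b
      decide⟩
  exact (pathGraph_connected 10).map path (by decide)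

theorem cliqueFree_three : subdividedPetersen.CliqueFree 3 := fun s hs => by
  obtain ⟨a, b, c, hab, hac, hbc, -⟩ := is3Clique_iff.mp hs
  revert a b c
  decide

theorem commonNeighbors_subsingleton (a b : Fin 11) (hab : a ≠ b) :
    (subdividedPetersen.commonNeighbors a b).Subsingleton := by
  rintro c ⟨hac, hbc⟩ d ⟨had, hbd⟩
  revert a c b d
  decide

theorem ncard_neighborSet (a : Fin 11) :
    (subdividedPetersen.neighborSet a).ncard = if a = 10 then 2 else 3 := by
  rw [ncard_eq_toFinset_card', ← neighborFinset_def, card_neighborFinset_eq_degree]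
  revert a
  decide

theorem locatingDominatingSet_code :
    subdividedPetersen.LocatingDominatingSet ({2, 8, 9, 10} : Finset (Fin 11)) := by
  apply locatingDominatingSet_of_forall <;> simp only [Finset.mem_coe] <;> decide

theorem four_le_ncard {T : Set (Fin 11)}
    (h : subdividedPetersen.LocatesDominates T (insert 10 T)ᶜ) : 4 ≤ T.ncard := by
  have hcount := card_le_of_locatesDominates_compl_insert commonNeighbors_subsingleton h
  rw [Nat.card_eq_fintype_card, Fintype.card_fin] at hcount
  by_contra! hT
  have hchoose : (T.ncard + 1).choose 2 ≤ Nat.choose 4 2 := Nat.choose_le_choose 2 (by omega)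
  rw [show Nat.choose 4 2 = 6 by decide] at hchoose
  omega

end subdividedPetersen

/-- Proposition: for every `k ≥ 3` there is a connected graph of order `n = 11k+1`,
girth at least 5, minimum degree at least 3, and location-domination number
`4k = (4/11)·(n-1)`. -/
theorem exists_connected_graph_gammaLD_eq_four_elevenths
    (k : ℕ) (hk : 3 ≤ k) :
    ∃ (V : Type) (inst : Fintype V) (G : SimpleGraph V),
      G.Connected ∧
      @Fintype.card V inst = 11 * k + 1 ∧
      5 ≤ G.egirth ∧
      (∀ v : V, 3 ≤ (G.neighborSet v).ncard) ∧
      G.gammaLD = 4 * k := by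
  have : Nontrivial (Fin k) := Fin.nontrivial_iff_two_le.mpr (by omega)
  refine ⟨_, inferInstance, subdividedPetersen.hubJoin 10 (Fin k),
    hubJoin_connected subdividedPetersen.connected,
    by rw [Fintype.card_option, Fintype.card_prod, Fintype.card_fin, Fintype.card_fin, mul_comm],
    five_le_egirth (hubJoin_cliqueFree_three subdividedPetersen.cliqueFree_three)
      (hubJoin_commonNeighbors_subsingleton subdividedPetersen.commonNeighbors_subsingleton),
    hubJoin_le_ncard_neighborSet ?_ ?_ ?_, ?_⟩
  · intro a ha
    rw [subdividedPetersen.ncard_neighborSet, if_neg ha]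
  · rw [subdividedPetersen.ncard_neighborSet, if_pos rfl]
  · rwa [Nat.card_fin]
  · refine gammaLD_eq (subdividedPetersen.locatingDominatingSet_code.hubJoin (by decide)) ?_
      fun C hC => ?_
    · rw [ncard_image_some_univ_prod, Nat.card_fin, ncard_coe_finset, mul_comm]
      rfl
    · simpa [mul_comm] using hubJoin_mul_le_ncard (fun _ => subdividedPetersen.four_le_ncard) hC
end
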